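/- arXiv:2303.08881 — 4 statements merged into one kernel-verified Lean document; each statement's English description precedes it below -/
import Mathlib

section
/- (Proposition 2.1, part 1.) Suppose A is SPD. For every n×n2 block matrix P of the form P = [W; I] (arbitrary n1×n2 top block W, identity n2×n2 bottom block), one has (I − Q_A)·P = P⋆, where Q_A = G·B⁻¹·Gᵀ·A. That is, the ideal interpolation P⋆ is obtained from any such P by the A-orthogonal projection onto the A-orthogonal complement of the range of G. -/
/-!
Since `Gᵀ` extracts the first block row, `Gᵀ A [W; I] = B W + F`, so
`Q_A [W; I] = [W + B⁻¹ F; 0]`. Subtracting it from `[W; I]` cancels `W` and leaves `[-B⁻¹ F; I]`.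
-/

open Matrix

namespace Matrix

variable {m n R : Type*}

theorem PosDef.of_fromBlocks₁₁ [Ring R] [PartialOrder R] [StarRing R] {B : Matrix m m R}
    {F : Matrix m n R} {E : Matrix n m R} {C : Matrix n n R} (h : (fromBlocks B F E C).PosDef) :
    B.PosDef :=
  h.submatrix Sum.inl_injective

variable [Fintype m] [Fintype n] [DecidableEq m] [CommRing R]

theorem transpose_fromRows_one_zero_mul_fromBlocks (B : Matrix m m R) (F : Matrix m n R)
    (E : Matrix n m R) (C : Matrix n n R) :
    (fromRows 1 0 : Matrix (m ⊕ n) m R)ᵀ * fromBlocks B F E C = fromCols B F := by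
  simp [transpose_fromRows, fromCols_mul_fromBlocks]

theorem one_sub_mul_fromRows_one_eq_fromRows_neg_inv_mul [DecidableEq n] {B : Matrix m m R}
    (hB : IsUnit B) (F : Matrix m n R) (E : Matrix n m R) (C : Matrix n n R) (W : Matrix m n R) :
    ((1 : Matrix (m ⊕ n) (m ⊕ n) R) - (fromRows 1 0 : Matrix (m ⊕ n) m R) * B⁻¹ *
      (fromRows 1 0 : Matrix (m ⊕ n) m R)ᵀ * fromBlocks B F E C) *
      fromRows W (1 : Matrix n n R) = fromRows (-(B⁻¹ * F)) 1 := by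
  have hBB : B⁻¹ * B = 1 := nonsing_inv_mul B ((isUnit_iff_isUnit_det B).mp hB)
  rw [Matrix.sub_mul, Matrix.one_mul, Matrix.mul_assoc _ _ (fromBlocks B F E C),
    transpose_fromRows_one_zero_mul_fromBlocks, Matrix.mul_assoc, fromCols_mul_fromRows,
    Matrix.mul_one, Matrix.mul_assoc, Matrix.mul_add, ← Matrix.mul_assoc B⁻¹ B, hBB,
    Matrix.one_mul, fromRows_mul]
  ext (i | i) j <;> simp

end Matrix

theorem stmt_3_general (n1 n2 : ℕ)
    (B : Matrix (Fin n1) (Fin n1) ℝ) (F : Matrix (Fin n1) (Fin n2) ℝ)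
    (E : Matrix (Fin n2) (Fin n1) ℝ) (C : Matrix (Fin n2) (Fin n2) ℝ)
    (A : Matrix (Fin n1 ⊕ Fin n2) (Fin n1 ⊕ Fin n2) ℝ) (hA : A = Matrix.fromBlocks B F E C)
    (hSPD : A.PosDef)
    (G : Matrix (Fin n1 ⊕ Fin n2) (Fin n1) ℝ)
    (hG : G = Matrix.fromRows (1 : Matrix (Fin n1) (Fin n1) ℝ) (0 : Matrix (Fin n2) (Fin n1) ℝ))
    (QA : Matrix (Fin n1 ⊕ Fin n2) (Fin n1 ⊕ Fin n2) ℝ)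
    (hQ : QA = G * B⁻¹ * Gᵀ * A)
    (Pstar : Matrix (Fin n1 ⊕ Fin n2) (Fin n2) ℝ)
    (hP : Pstar = Matrix.fromRows (-(B⁻¹ * F)) (1 : Matrix (Fin n2) (Fin n2) ℝ)) :
    ∀ W : Matrix (Fin n1) (Fin n2) ℝ,
      (1 - QA) * Matrix.fromRows W (1 : Matrix (Fin n2) (Fin n2) ℝ) = Pstar := by
  intro W
  subst hA hG hQ hP
  exact one_sub_mul_fromRows_one_eq_fromRows_neg_inv_mul hSPD.of_fromBlocks₁₁.isUnit F E C W

/-- Proposition 2.1 (part 1): for SPD `A`, the ideal interpolation `P⋆` is obtained from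
any `P = [W; I]` by the `A`-orthogonal projection `I - Q_A` where `Q_A = G B⁻¹ Gᵀ A`:
`(I - Q_A) P = P⋆`. -/
theorem stmt_3 (n1 n2 : ℕ) (hn1 : 0 < n1) (hn2 : 0 < n2)
    (B : Matrix (Fin n1) (Fin n1) ℝ) (F : Matrix (Fin n1) (Fin n2) ℝ)
    (E : Matrix (Fin n2) (Fin n1) ℝ) (C : Matrix (Fin n2) (Fin n2) ℝ)
    (A : Matrix (Fin n1 ⊕ Fin n2) (Fin n1 ⊕ Fin n2) ℝ) (hA : A = Matrix.fromBlocks B F E C)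
    (hSPD : A.PosDef)
    (G : Matrix (Fin n1 ⊕ Fin n2) (Fin n1) ℝ)
    (hG : G = Matrix.fromRows (1 : Matrix (Fin n1) (Fin n1) ℝ) (0 : Matrix (Fin n2) (Fin n1) ℝ))
    (QA : Matrix (Fin n1 ⊕ Fin n2) (Fin n1 ⊕ Fin n2) ℝ)
    (hQ : QA = G * B⁻¹ * Gᵀ * A)
    (Pstar : Matrix (Fin n1 ⊕ Fin n2) (Fin n2) ℝ)
    (hP : Pstar = Matrix.fromRows (-(B⁻¹ * F)) (1 : Matrix (Fin n2) (Fin n2) ℝ)) :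
    ∀ W : Matrix (Fin n1) (Fin n2) ℝ,
      (1 - QA) * Matrix.fromRows W (1 : Matrix (Fin n2) (Fin n2) ℝ) = Pstar :=
  stmt_3_general n1 n2 B F E C A hA hSPD G hG QA hQ Pstar hP
end

section
/- (Pythagorean identity in the proof of Proposition 2.1.) Suppose A is SPD and let Q_A = G·B⁻¹·Gᵀ·A. For every n×n2 block matrix P of the form P = [W; I] (arbitrary n1×n2 top block W, identity n2×n2 bottom block) and every vector v ∈ ℝ^{n2}: (P·v)ᵀ·A·(P·v) = (P⋆·v)ᵀ·A·(P⋆·v) + (Q_A·P·v)ᵀ·A·(Q_A·P·v), i.e. ‖Pv‖²_A = ‖P⋆v‖²_A + ‖Q_A P v‖²_A. -/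
/-!
Write `P = [W; I]`. Since `Gᵀ A P = B W + F`, one gets `Q_A P = [W + B⁻¹F; 0]`, hence
`P v = P⋆ v + Q_A P v`. On the other hand `A P⋆ = [0; C - E B⁻¹ F]` vanishes on the first block,
so `P⋆ v` is `A`-orthogonal to `Q_A P v`, and the identity is Pythagoras for the symmetric form
`x ↦ xᵀ A x`.
-/

namespace Matrix

theorem PosDef.isUnit_det_toBlocks₁₁ {m n K : Type*} [Fintype m] [Fintype n] [DecidableEq m]
    [Field K] [PartialOrder K] [StarRing K] {A : Matrix (m ⊕ n) (m ⊕ n) K} (hA : A.PosDef) :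
    IsUnit A.toBlocks₁₁.det :=
  (isUnit_iff_isUnit_det _).mp (hA.submatrix Sum.inl_injective).isUnit

variable {m n R : Type*} [Fintype m] [Fintype n] [CommRing R]

theorem IsSymm.dotProduct_mulVec_add_of_orthogonal {A : Matrix n n R} (hA : A.IsSymm)
    {x y : n → R} (hxy : x ⬝ᵥ (A *ᵥ y) = 0) :
    (x + y) ⬝ᵥ (A *ᵥ (x + y)) = x ⬝ᵥ (A *ᵥ x) + y ⬝ᵥ (A *ᵥ y) := by
  have hyx : y ⬝ᵥ (A *ᵥ x) = 0 := by rw [← hA.eq, dotProduct_transpose_mulVec, hxy]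
  simp only [mulVec_add, dotProduct_add, add_dotProduct, hxy, hyx]
  ring

variable [DecidableEq m] {B : Matrix m m R} (F : Matrix m n R) (E : Matrix n m R)
  (C : Matrix n n R)

theorem fromBlocks_mul_fromRows_neg_inv_mul [DecidableEq n] (hB : IsUnit B.det) :
    fromBlocks B F E C * fromRows (-(B⁻¹ * F)) (1 : Matrix n n R) =
      fromRows 0 (C - E * B⁻¹ * F) := by
  simp [fromBlocks_mul_fromRows, Matrix.mul_assoc, mul_nonsing_inv_cancel_left _ _ hB,
    neg_add_eq_sub]

theorem fromRows_one_zero_mul_inv_mul_transpose_mul_fromBlocks_mul_fromRows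
    (hB : IsUnit B.det) (W : Matrix m n R) (D : Matrix n n R) :
    fromRows (1 : Matrix m m R) 0 * B⁻¹ * (fromRows (1 : Matrix m m R) 0)ᵀ *
        fromBlocks B F E C * fromRows W D =
      fromRows (W + B⁻¹ * F * D) 0 := by
  simp [transpose_fromRows, fromCols_mul_fromBlocks, fromBlocks_mul_fromRows, Matrix.mul_assoc,
    nonsing_inv_mul _ hB]

end Matrix

open Matrix

theorem stmt_4_general (n1 n2 : ℕ)
    (B : Matrix (Fin n1) (Fin n1) ℝ) (F : Matrix (Fin n1) (Fin n2) ℝ)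
    (E : Matrix (Fin n2) (Fin n1) ℝ) (C : Matrix (Fin n2) (Fin n2) ℝ)
    (A : Matrix (Fin n1 ⊕ Fin n2) (Fin n1 ⊕ Fin n2) ℝ) (hA : A = Matrix.fromBlocks B F E C)
    (hSPD : A.PosDef)
    (G : Matrix (Fin n1 ⊕ Fin n2) (Fin n1) ℝ)
    (hG : G = Matrix.fromRows (1 : Matrix (Fin n1) (Fin n1) ℝ) (0 : Matrix (Fin n2) (Fin n1) ℝ))
    (QA : Matrix (Fin n1 ⊕ Fin n2) (Fin n1 ⊕ Fin n2) ℝ)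
    (hQ : QA = G * B⁻¹ * Gᵀ * A)
    (Pstar : Matrix (Fin n1 ⊕ Fin n2) (Fin n2) ℝ)
    (hP : Pstar = Matrix.fromRows (-(B⁻¹ * F)) (1 : Matrix (Fin n2) (Fin n2) ℝ)) :
    ∀ (W : Matrix (Fin n1) (Fin n2) ℝ) (v : Fin n2 → ℝ),
      (Matrix.fromRows W (1 : Matrix (Fin n2) (Fin n2) ℝ) *ᵥ v) ⬝ᵥ
          (A *ᵥ (Matrix.fromRows W (1 : Matrix (Fin n2) (Fin n2) ℝ) *ᵥ v)) =
        (Pstar *ᵥ v) ⬝ᵥ (A *ᵥ (Pstar *ᵥ v)) +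
          (QA *ᵥ (Matrix.fromRows W (1 : Matrix (Fin n2) (Fin n2) ℝ) *ᵥ v)) ⬝ᵥ
            (A *ᵥ (QA *ᵥ (Matrix.fromRows W (1 : Matrix (Fin n2) (Fin n2) ℝ) *ᵥ v))) := by
  intro W v
  set P := Matrix.fromRows W (1 : Matrix (Fin n2) (Fin n2) ℝ)
  have hsym : A.IsSymm := isHermitian_iff_isSymm.mp hSPD.isHermitian
  have hB : IsUnit B.det := by simpa [hA] using hSPD.isUnit_det_toBlocks₁₁
  have hQP : QA * P = fromRows (W + B⁻¹ * F) 0 := by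
    simpa [hQ, hG, hA] using
      fromRows_one_zero_mul_inv_mul_transpose_mul_fromBlocks_mul_fromRows F E C hB W 1
  have hPv : P *ᵥ v = Pstar *ᵥ v + QA *ᵥ (P *ᵥ v) := by
    rw [mulVec_mulVec, ← add_mulVec, hQP, hP]
    congr 1
    ext (i | i) j <;> simp [P]
  have horth : (Pstar *ᵥ v) ⬝ᵥ (A *ᵥ (QA *ᵥ (P *ᵥ v))) = 0 := by
    rw [← hsym.eq, dotProduct_transpose_mulVec, mulVec_mulVec, mulVec_mulVec, hQP, hA, hP,
      fromBlocks_mul_fromRows_neg_inv_mul F E C hB]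
    simp [sumElim_dotProduct_sumElim]
  conv_lhs => rw [hPv]
  exact hsym.dotProduct_mulVec_add_of_orthogonal horth

/-- Pythagorean identity in the proof of Proposition 2.1: for SPD `A`, any `P = [W; I]`
and any `v`, `‖Pv‖²_A = ‖P⋆v‖²_A + ‖Q_A P v‖²_A`, where `Q_A = G B⁻¹ Gᵀ A`. -/
theorem stmt_4 (n1 n2 : ℕ) (hn1 : 0 < n1) (hn2 : 0 < n2)
    (B : Matrix (Fin n1) (Fin n1) ℝ) (F : Matrix (Fin n1) (Fin n2) ℝ)
    (E : Matrix (Fin n2) (Fin n1) ℝ) (C : Matrix (Fin n2) (Fin n2) ℝ)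
    (A : Matrix (Fin n1 ⊕ Fin n2) (Fin n1 ⊕ Fin n2) ℝ) (hA : A = Matrix.fromBlocks B F E C)
    (hSPD : A.PosDef)
    (G : Matrix (Fin n1 ⊕ Fin n2) (Fin n1) ℝ)
    (hG : G = Matrix.fromRows (1 : Matrix (Fin n1) (Fin n1) ℝ) (0 : Matrix (Fin n2) (Fin n1) ℝ))
    (QA : Matrix (Fin n1 ⊕ Fin n2) (Fin n1 ⊕ Fin n2) ℝ)
    (hQ : QA = G * B⁻¹ * Gᵀ * A)
    (Pstar : Matrix (Fin n1 ⊕ Fin n2) (Fin n2) ℝ)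
    (hP : Pstar = Matrix.fromRows (-(B⁻¹ * F)) (1 : Matrix (Fin n2) (Fin n2) ℝ)) :
    ∀ (W : Matrix (Fin n1) (Fin n2) ℝ) (v : Fin n2 → ℝ),
      (Matrix.fromRows W (1 : Matrix (Fin n2) (Fin n2) ℝ) *ᵥ v) ⬝ᵥ
          (A *ᵥ (Matrix.fromRows W (1 : Matrix (Fin n2) (Fin n2) ℝ) *ᵥ v)) =
        (Pstar *ᵥ v) ⬝ᵥ (A *ᵥ (Pstar *ᵥ v)) +
          (QA *ᵥ (Matrix.fromRows W (1 : Matrix (Fin n2) (Fin n2) ℝ) *ᵥ v)) ⬝ᵥ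
            (A *ᵥ (QA *ᵥ (Matrix.fromRows W (1 : Matrix (Fin n2) (Fin n2) ℝ) *ᵥ v))) :=
  stmt_4_general n1 n2 B F E C A hA hSPD G hG QA hQ Pstar hP
end

section
/- (Coarse operator identity R·A·P = L_S·U_S + R·H·P.) Suppose A = L·U + H, where L = Matrix.fromBlocks L_B 0 W̃ L_S is block lower triangular with L_B (n1×n1) invertible, U = Matrix.fromBlocks U_B Z̃ 0 U_S is block upper triangular with U_B (n1×n1) invertible, and H is an n×n matrix of dropped entries. Define R = [−W̃·L_B⁻¹ | I] (left block −W̃·L_B⁻¹, identity n2×n2 right block) and P = [−U_B⁻¹·Z̃; I] (top block −U_B⁻¹·Z̃, identity bottom block). Then R·A·P = L_S·U_S + R·H·P. -/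
open Matrix

/-!
The row block `R` eliminates the off-diagonal block of `L` and the column block `P` that of `U`:
`R L = [0 | L_S]` and `U P = [0; U_S]`, so `R (L U) P = (R L)(U P) = L_S U_S`, and the dropped
entries `H` are carried along linearly.
-/

section BlockElimination

variable {m n α : Type*} [Fintype m] [Fintype n] [DecidableEq m] [DecidableEq n] [CommRing α]

-- Without the ascription on `1`, `*` elaborates through the `CStarMatrix` instance.
theorem fromCols_neg_mul_inv_one_mul_fromBlocks {LB : Matrix m m α} (hLB : IsUnit LB)
    (W : Matrix n m α) (LS : Matrix n n α) :
    fromCols (-(W * LB⁻¹)) (1 : Matrix n n α) * fromBlocks LB 0 W LS = fromCols 0 LS := by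
  rw [fromCols_mul_fromBlocks, Matrix.neg_mul,
    nonsing_inv_mul_cancel_right LB W ((isUnit_iff_isUnit_det LB).mp hLB)]
  simp

theorem fromBlocks_mul_fromRows_neg_inv_mul_one {UB : Matrix m m α} (hUB : IsUnit UB)
    (Z : Matrix m n α) (US : Matrix n n α) :
    fromBlocks UB Z 0 US * fromRows (-(UB⁻¹ * Z)) (1 : Matrix n n α) = fromRows 0 US := by
  rw [fromBlocks_mul_fromRows, Matrix.mul_neg,
    mul_nonsing_inv_cancel_left UB Z ((isUnit_iff_isUnit_det UB).mp hUB)]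
  simp

end BlockElimination

theorem stmt_14_general (n1 n2 : ℕ)
    (A : Matrix (Fin n1 ⊕ Fin n2) (Fin n1 ⊕ Fin n2) ℝ)
    (LB UB : Matrix (Fin n1) (Fin n1) ℝ) (hLB : IsUnit LB) (hUB : IsUnit UB)
    (Wtilde : Matrix (Fin n2) (Fin n1) ℝ) (Ztilde : Matrix (Fin n1) (Fin n2) ℝ)
    (LS US : Matrix (Fin n2) (Fin n2) ℝ)
    (H : Matrix (Fin n1 ⊕ Fin n2) (Fin n1 ⊕ Fin n2) ℝ)
    (L : Matrix (Fin n1 ⊕ Fin n2) (Fin n1 ⊕ Fin n2) ℝ)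
    (hL : L = Matrix.fromBlocks LB (0 : Matrix (Fin n1) (Fin n2) ℝ) Wtilde LS)
    (U : Matrix (Fin n1 ⊕ Fin n2) (Fin n1 ⊕ Fin n2) ℝ)
    (hU : U = Matrix.fromBlocks UB Ztilde (0 : Matrix (Fin n2) (Fin n1) ℝ) US)
    (hA : A = L * U + H)
    (R : Matrix (Fin n2) (Fin n1 ⊕ Fin n2) ℝ)
    (hR : R = Matrix.fromCols (-(Wtilde * LB⁻¹)) (1 : Matrix (Fin n2) (Fin n2) ℝ))
    (P : Matrix (Fin n1 ⊕ Fin n2) (Fin n2) ℝ)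
    (hP : P = Matrix.fromRows (-(UB⁻¹ * Ztilde)) (1 : Matrix (Fin n2) (Fin n2) ℝ)) :
    R * A * P = LS * US + R * H * P := by
  have hRL : R * L = fromCols 0 LS := by
    rw [hR, hL, fromCols_neg_mul_inv_one_mul_fromBlocks hLB]
  have hUP : U * P = fromRows 0 US := by
    rw [hU, hP, fromBlocks_mul_fromRows_neg_inv_mul_one hUB]
  calc R * A * P = R * L * (U * P) + R * H * P := by
        rw [hA]; simp only [Matrix.mul_add, Matrix.add_mul, Matrix.mul_assoc]
    _ = LS * US + R * H * P := by
        rw [hRL, hUP, fromCols_mul_fromRows, Matrix.zero_mul, zero_add]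

/-- Coarse operator identity: if `A = LU + H` with block triangular ILU factors
`L = [L_B 0; W̃ L_S]`, `U = [U_B Z̃; 0 U_S]`, and `R = [-W̃ L_B⁻¹ | I]`,
`P = [-U_B⁻¹ Z̃; I]`, then `R A P = L_S U_S + R H P`. -/
theorem stmt_14 (n1 n2 : ℕ) (hn1 : 0 < n1) (hn2 : 0 < n2)
    (A : Matrix (Fin n1 ⊕ Fin n2) (Fin n1 ⊕ Fin n2) ℝ)
    (LB UB : Matrix (Fin n1) (Fin n1) ℝ) (hLB : IsUnit LB) (hUB : IsUnit UB)
    (Wtilde : Matrix (Fin n2) (Fin n1) ℝ) (Ztilde : Matrix (Fin n1) (Fin n2) ℝ)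
    (LS US : Matrix (Fin n2) (Fin n2) ℝ)
    (H : Matrix (Fin n1 ⊕ Fin n2) (Fin n1 ⊕ Fin n2) ℝ)
    (L : Matrix (Fin n1 ⊕ Fin n2) (Fin n1 ⊕ Fin n2) ℝ)
    (hL : L = Matrix.fromBlocks LB (0 : Matrix (Fin n1) (Fin n2) ℝ) Wtilde LS)
    (U : Matrix (Fin n1 ⊕ Fin n2) (Fin n1 ⊕ Fin n2) ℝ)
    (hU : U = Matrix.fromBlocks UB Ztilde (0 : Matrix (Fin n2) (Fin n1) ℝ) US)
    (hA : A = L * U + H)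
    (R : Matrix (Fin n2) (Fin n1 ⊕ Fin n2) ℝ)
    (hR : R = Matrix.fromCols (-(Wtilde * LB⁻¹)) (1 : Matrix (Fin n2) (Fin n2) ℝ))
    (P : Matrix (Fin n1 ⊕ Fin n2) (Fin n2) ℝ)
    (hP : P = Matrix.fromRows (-(UB⁻¹ * Ztilde)) (1 : Matrix (Fin n2) (Fin n2) ℝ)) :
    R * A * P = LS * US + R * H * P :=
  stmt_14_general n1 n2 A LB UB hLB hUB Wtilde Ztilde LS US H L hL U hU hA R hR P hP
end

section
/- (The MILU coarse preconditioner preserves the action on the constant vector: R·A·P·𝟙 = L_S·U_S·𝟙.) Suppose A = L·U + H, where L = Matrix.fromBlocks L_B 0 W̃ L_S with L_B (n1×n1) invertible, U = Matrix.fromBlocks U_B Z̃ 0 U_S with U_B (n1×n1) invertible, and H is an n×n matrix. Define R = [−W̃·L_B⁻¹ | I] and P = [−U_B⁻¹·Z̃; I]. If H·𝟙_n = 0 (the residual matrix annihilates the all-ones vector of length n) and P·𝟙_{n2} = 𝟙_n (the interpolation maps the all-ones vector of length n2 to the all-ones vector of length n), then R·A·P·𝟙_{n2} = L_S·U_S·𝟙_{n2}.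 -/
open Matrix

/-!
The restriction `R` annihilates the first block column of `L` and the interpolation `P`
annihilates the first block row of `U`: `R * L = [0 | L_S]` and `U * P = [0; U_S]`. Hence
`R * (L * U) * P = L_S * U_S`, and the residual contributes `R * H * P * 𝟙 = R * (H * 𝟙) = 0`
because `P` maps `𝟙` to `𝟙`.
-/

namespace Matrix

theorem mul_add_mul_mulVec_of_mulVec_mulVec_eq_zero {k m n : Type*} [Fintype m]
    [Fintype n] {α : Type*} [NonUnitalCommSemiring α] (R : Matrix k m α) (M H : Matrix m m α)
    (P : Matrix m n α) (v : n → α) (hH : H *ᵥ (P *ᵥ v) = 0) :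
    (R * (M + H) * P) *ᵥ v = (R * M * P) *ᵥ v := by
  rw [Matrix.mul_add, Matrix.add_mul, add_mulVec, ← mulVec_mulVec _ (R * H), ← mulVec_mulVec _ R H,
    hH, mulVec_zero, add_zero]

section Inverse

variable {m n : Type*} [Fintype m] [Fintype n] [DecidableEq m] [DecidableEq n] {α : Type*}
  [CommRing α]

theorem fromCols_neg_mul_inv_one_mul_fromBlocks (LB : Matrix m m α) (hLB : IsUnit LB)
    (W : Matrix n m α) (LS : Matrix n n α) :
    fromCols (-(W * LB⁻¹)) (1 : Matrix n n α) * fromBlocks LB 0 W LS = fromCols 0 LS := by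
  rw [fromCols_mul_fromBlocks]
  simp [Matrix.mul_assoc, nonsing_inv_mul LB (LB.isUnit_iff_isUnit_det.mp hLB)]

theorem fromBlocks_mul_fromRows_neg_inv_mul_one (UB : Matrix m m α) (hUB : IsUnit UB)
    (Z : Matrix m n α) (US : Matrix n n α) :
    fromBlocks UB Z 0 US * fromRows (-(UB⁻¹ * Z)) (1 : Matrix n n α) = fromRows 0 US := by
  rw [fromBlocks_mul_fromRows]
  simp [← Matrix.mul_assoc, mul_nonsing_inv UB (UB.isUnit_iff_isUnit_det.mp hUB)]

end Inverse

end Matrix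

theorem stmt_15_general (n1 n2 : ℕ)
    (A : Matrix (Fin n1 ⊕ Fin n2) (Fin n1 ⊕ Fin n2) ℝ)
    (LB UB : Matrix (Fin n1) (Fin n1) ℝ) (hLB : IsUnit LB) (hUB : IsUnit UB)
    (Wtilde : Matrix (Fin n2) (Fin n1) ℝ) (Ztilde : Matrix (Fin n1) (Fin n2) ℝ)
    (LS US : Matrix (Fin n2) (Fin n2) ℝ)
    (H : Matrix (Fin n1 ⊕ Fin n2) (Fin n1 ⊕ Fin n2) ℝ)
    (L : Matrix (Fin n1 ⊕ Fin n2) (Fin n1 ⊕ Fin n2) ℝ)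
    (hL : L = Matrix.fromBlocks LB (0 : Matrix (Fin n1) (Fin n2) ℝ) Wtilde LS)
    (U : Matrix (Fin n1 ⊕ Fin n2) (Fin n1 ⊕ Fin n2) ℝ)
    (hU : U = Matrix.fromBlocks UB Ztilde (0 : Matrix (Fin n2) (Fin n1) ℝ) US)
    (hA : A = L * U + H)
    (R : Matrix (Fin n2) (Fin n1 ⊕ Fin n2) ℝ)
    (hR : R = Matrix.fromCols (-(Wtilde * LB⁻¹)) (1 : Matrix (Fin n2) (Fin n2) ℝ))
    (P : Matrix (Fin n1 ⊕ Fin n2) (Fin n2) ℝ)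
    (hP : P = Matrix.fromRows (-(UB⁻¹ * Ztilde)) (1 : Matrix (Fin n2) (Fin n2) ℝ))
    (hHone : H *ᵥ (fun _ => (1 : ℝ)) = 0)
    (hPone : P *ᵥ (fun _ => (1 : ℝ)) = fun _ => (1 : ℝ)) :
    (R * A * P) *ᵥ (fun _ => (1 : ℝ)) = (LS * US) *ᵥ (fun _ => (1 : ℝ)) := by
  have hRL : R * L = fromCols 0 LS := by
    rw [hR, hL, fromCols_neg_mul_inv_one_mul_fromBlocks LB hLB]
  have hUP : U * P = fromRows 0 US := by
    rw [hU, hP, fromBlocks_mul_fromRows_neg_inv_mul_one UB hUB]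
  have hRLUP : R * (L * U) * P = LS * US := by
    rw [← Matrix.mul_assoc R L U, Matrix.mul_assoc (R * L) U P, hRL, hUP,
      fromCols_mul_fromRows, Matrix.zero_mul, zero_add]
  rw [hA, mul_add_mul_mulVec_of_mulVec_mulVec_eq_zero R _ H P _ (by rw [hPone, hHone]), hRLUP]

/-- The MILU coarse preconditioner preserves the action on the constant vector: if
`A = LU + H` with block triangular factors, `R = [-W̃ L_B⁻¹ | I]`, `P = [-U_B⁻¹ Z̃; I]`,
`H 𝟙 = 0` and `P 𝟙 = 𝟙`, then `R A P 𝟙 = L_S U_S 𝟙`. -/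
theorem stmt_15 (n1 n2 : ℕ) (hn1 : 0 < n1) (hn2 : 0 < n2)
    (A : Matrix (Fin n1 ⊕ Fin n2) (Fin n1 ⊕ Fin n2) ℝ)
    (LB UB : Matrix (Fin n1) (Fin n1) ℝ) (hLB : IsUnit LB) (hUB : IsUnit UB)
    (Wtilde : Matrix (Fin n2) (Fin n1) ℝ) (Ztilde : Matrix (Fin n1) (Fin n2) ℝ)
    (LS US : Matrix (Fin n2) (Fin n2) ℝ)
    (H : Matrix (Fin n1 ⊕ Fin n2) (Fin n1 ⊕ Fin n2) ℝ)
    (L : Matrix (Fin n1 ⊕ Fin n2) (Fin n1 ⊕ Fin n2) ℝ)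
    (hL : L = Matrix.fromBlocks LB (0 : Matrix (Fin n1) (Fin n2) ℝ) Wtilde LS)
    (U : Matrix (Fin n1 ⊕ Fin n2) (Fin n1 ⊕ Fin n2) ℝ)
    (hU : U = Matrix.fromBlocks UB Ztilde (0 : Matrix (Fin n2) (Fin n1) ℝ) US)
    (hA : A = L * U + H)
    (R : Matrix (Fin n2) (Fin n1 ⊕ Fin n2) ℝ)
    (hR : R = Matrix.fromCols (-(Wtilde * LB⁻¹)) (1 : Matrix (Fin n2) (Fin n2) ℝ))
    (P : Matrix (Fin n1 ⊕ Fin n2) (Fin n2) ℝ)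
    (hP : P = Matrix.fromRows (-(UB⁻¹ * Ztilde)) (1 : Matrix (Fin n2) (Fin n2) ℝ))
    (hHone : H *ᵥ (fun _ => (1 : ℝ)) = 0)
    (hPone : P *ᵥ (fun _ => (1 : ℝ)) = fun _ => (1 : ℝ)) :
    (R * A * P) *ᵥ (fun _ => (1 : ℝ)) = (LS * US) *ᵥ (fun _ => (1 : ℝ)) :=
  stmt_15_general n1 n2 A LB UB hLB hUB Wtilde Ztilde LS US H L hL U hU hA R hR P hP hHone hPone
end
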